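/- One-step policy improvement bound with respect to the Policy Bellman residual: let π be a policy, let v be a function on X with residual b' := T^π v − v, and let π' be a policy greedy with respect to v. Then, writing P and P' for the stochastic matrices of π and π', the following componentwise inequality holds: v_* − v^{π'} ≤ γP_*(v_* − v^π) + (γP_*(I−γP)^{-1} − γP'(I−γP')^{-1}) b'. -/

import Mathlib

open Matrix Filter Finset

section MDPDefs

variable {X : Type*} {A : Type*} [Fintype X] [Nonempty X] [DecidableEq X]
  [Fintype A] [Nonempty A]

/-- Transition matrix of a policy: `P^π i j = p i (π i) j`. -/
noncomputable def Pmat (p : X → A → X → ℝ) (π : X → A) : Matrix X X ℝ :=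
  Matrix.of fun i j => p i (π i) j

/-- Expected reward vector of a policy. -/
noncomputable def rvec (p : X → A → X → ℝ) (r : X → A → X → ℝ) (π : X → A) : X → ℝ :=
  fun i => ∑ j, p i (π i) j * r i (π i) j

/-- The Bellman operator of a policy: `T^π v = r^π + γ P^π v`. -/
noncomputable def Tpol (p : X → A → X → ℝ) (r : X → A → X → ℝ) (γ : ℝ)
    (π : X → A) (v : X → ℝ) : X → ℝ :=
  rvec p r π + γ • (Pmat p π).mulVec v

/-- The optimal Bellman operator: `(T v) i = max_a Σ_j p i a j (r i a j + γ v j)`. -/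
noncomputable def Topt (p : X → A → X → ℝ) (r : X → A → X → ℝ) (γ : ℝ)
    (v : X → ℝ) : X → ℝ :=
  fun i => Finset.univ.sup' Finset.univ_nonempty
    (fun a => ∑ j, p i a j * (r i a j + γ * v j))

/-- A policy is greedy with respect to `v` when `T^π v = T v`. -/
def Greedy (p : X → A → X → ℝ) (r : X → A → X → ℝ) (γ : ℝ)
    (π : X → A) (v : X → ℝ) : Prop :=
  Tpol p r γ π v = Topt p r γ v

/-- The value of a policy: `v^π = (I - γ P^π)⁻¹ r^π`. -/
noncomputable def vpi (p : X → A → X → ℝ) (r : X → A → X → ℝ) (γ : ℝ)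
    (π : X → A) : X → ℝ :=
  ((1 : Matrix X X ℝ) - γ • Pmat p π)⁻¹.mulVec (rvec p r π)

/-- The λ policy iteration update operator
`T_λ^π v = (I - λγ P^π)⁻¹ (r^π + (1-λ)γ P^π v)`. -/
noncomputable def Tlam (p : X → A → X → ℝ) (r : X → A → X → ℝ) (γ lam : ℝ)
    (π : X → A) (v : X → ℝ) : X → ℝ :=
  ((1 : Matrix X X ℝ) - (lam * γ) • Pmat p π)⁻¹.mulVec
    (rvec p r π + ((1 - lam) * γ) • (Pmat p π).mulVec v)

/-- A stochastic matrix: nonnegative entries, all row sums equal to one. -/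
def IsStochastic (M : Matrix X X ℝ) : Prop :=
  (∀ i j, 0 ≤ M i j) ∧ ∀ i, ∑ j, M i j = 1

/-- A probability distribution on `X`. -/
def IsDistribution (μ : X → ℝ) : Prop :=
  (∀ x, 0 ≤ μ x) ∧ ∑ x, μ x = 1

/-- Weighted L_p norm `‖u‖_{p,μ} = (Σ_x μ x |u x|^p)^(1/p)`. -/
noncomputable def wLpNorm (pp : ℝ) (μ : X → ℝ) (u : X → ℝ) : ℝ :=
  (∑ x, μ x * |u x| ^ pp) ^ (1 / pp)

/-- Max norm `‖u‖_∞ = max_x |u x|`. -/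
noncomputable def linfNorm (u : X → ℝ) : ℝ :=
  Finset.univ.sup' Finset.univ_nonempty fun x => |u x|

/-- Span seminorm `spn_∞ u = max_x u x - min_x u x`. -/
noncomputable def spanInf (u : X → ℝ) : ℝ :=
  (Finset.univ.sup' Finset.univ_nonempty u) - (Finset.univ.inf' Finset.univ_nonempty u)

/-- Span seminorm `spn_{p,μ} u = 2 min_a ‖u - a e‖_{p,μ}`. -/
noncomputable def spanLp (pp : ℝ) (μ : X → ℝ) (u : X → ℝ) : ℝ :=
  2 * ⨅ a : ℝ, wLpNorm pp μ (fun x => u x - a)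

/-- Componentwise limsup of a sequence of vectors. -/
noncomputable def limsupVec (f : ℕ → X → ℝ) : X → ℝ :=
  fun x => Filter.atTop.limsup fun k => f k x

/-- The product `M k * M (k-1) * ⋯ * M (j+1)` (identity when `k ≤ j`). -/
noncomputable def descProd (M : ℕ → Matrix X X ℝ) (j k : ℕ) : Matrix X X ℝ :=
  ((List.range (k - j)).map fun t => M (k - t)).prod

/-- The mixture distribution `½ μ (M + M')` (as a row vector pushed through matrices). -/
noncomputable def mixDist (μ : X → ℝ) (M M' : Matrix X X ℝ) : X → ℝ :=
  Matrix.vecMul μ (((1 : ℝ) / 2) • (M + M'))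

/-- Concentration coefficient `C(ν) = max_{i,a,j} p i a j / ν j`. -/
noncomputable def concCoef (p : X → A → X → ℝ) (ν : X → ℝ) : ℝ :=
  Finset.univ.sup' Finset.univ_nonempty
    (fun x : X × A × X => p x.1 x.2.1 x.2.2 / ν x.2.2)

/-- `β = (1-λ)γ/(1-λγ)`. -/
noncomputable def betaF (γ lam : ℝ) : ℝ := (1 - lam) * γ / (1 - lam * γ)

/-- `A_k = (1-λγ)(I - λγ P_k)⁻¹ P_k`. -/
noncomputable def Amat (p : X → A → X → ℝ) (γ lam : ℝ) (π : X → A) : Matrix X X ℝ :=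
  (1 - lam * γ) • (((1 : Matrix X X ℝ) - (lam * γ) • Pmat p π)⁻¹ * Pmat p π)

/-- `B_{jk}` (also `E'_{k k₀}` with `k₀ = j`). -/
noncomputable def Bmat (p : X → A → X → ℝ) (γ lam : ℝ) (π : ℕ → X → A) (πs : X → A)
    (j k : ℕ) : Matrix X X ℝ :=
  ((1 - γ) / γ ^ (k - j)) • (
    (lam * γ / (1 - lam * γ)) •
      (∑ i ∈ Finset.Ico j k, (γ ^ (k - 1 - i) * betaF γ lam ^ (i - j)) •
        ((Pmat p πs) ^ (k - 1 - i) * descProd (fun l => Amat p γ lam (π l)) j (i + 1)))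
    + (betaF γ lam ^ (k - j)) •
      (((1 : Matrix X X ℝ) - γ • Pmat p (π k))⁻¹ *
        descProd (fun l => Amat p γ lam (π l)) j k))

/-- `B'_{jk} = γ B_{jk} P_j + (1-γ)(P_*)^{k-j}`. -/
noncomputable def Bmat' (p : X → A → X → ℝ) (γ lam : ℝ) (π : ℕ → X → A) (πs : X → A)
    (j k : ℕ) : Matrix X X ℝ :=
  γ • (Bmat p γ lam π πs j k * Pmat p (π j)) + (1 - γ) • (Pmat p πs) ^ (k - j)

/-- `E_{k k₀} = (1-γ)(P_*)^{k-k₀}(I-γP_*)⁻¹`. -/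
noncomputable def Emat (p : X → A → X → ℝ) (γ : ℝ) (πs : X → A) (k0 k : ℕ) :
    Matrix X X ℝ :=
  (1 - γ) • ((Pmat p πs) ^ (k - k0) * ((1 : Matrix X X ℝ) - γ • Pmat p πs)⁻¹)

/-- `F_{k k₀} = (1-γ)(P_*)^{k-k₀} + γ E'_{k k₀} P_*`. -/
noncomputable def Fmat (p : X → A → X → ℝ) (γ lam : ℝ) (π : ℕ → X → A) (πs : X → A)
    (k0 k : ℕ) : Matrix X X ℝ :=
  (1 - γ) • (Pmat p πs) ^ (k - k0) + γ • (Bmat p γ lam π πs k0 k * Pmat p πs)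

/-- `(1-γ)²(I-γP_{πs})⁻¹ (P_{πa} (I-γP_{πb})⁻¹)`; this gives `C_k` and `C'_k`. -/
noncomputable def Cmat (p : X → A → X → ℝ) (γ : ℝ) (πs πa πb : X → A) :
    Matrix X X ℝ :=
  (1 - γ) ^ 2 • (((1 : Matrix X X ℝ) - γ • Pmat p πs)⁻¹ *
    (Pmat p πa * ((1 : Matrix X X ℝ) - γ • Pmat p πb)⁻¹))

/-- `D = (1-γ) P (I-γP)⁻¹`. -/
noncomputable def Dmat (p : X → A → X → ℝ) (γ : ℝ) (π : X → A) : Matrix X X ℝ :=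
  (1 - γ) • (Pmat p π * ((1 : Matrix X X ℝ) - γ • Pmat p π)⁻¹)

end MDPDefs

/-! Write `b = T^π v - v` and `b' = T v - v = T^{π'} v - v`. Every policy satisfies
`v^σ = v + (I - γP_σ)⁻¹ (T^σ v - v)`, and `(I - γP')⁻¹ = I + γP'(I - γP')⁻¹`, so
`v_* - v^{π'} = (v_* - v) - b' - γP'(I - γP')⁻¹ b'`. Optimality of `π_*` gives
`v_* - v ≤ γP_*(v_* - v) + b'`, and since `b ≤ b'` and `P'(I - γP')⁻¹` is a nonnegative matrix
(a minimum principle for `I - γP`), `b'` may be replaced by `b` in the last term. Substituting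
`v = v^π - (I - γP)⁻¹ b` turns the bound into the claimed one. -/

lemma Matrix.mulVec_mono_of_nonneg {X : Type*} [Fintype X] {M : Matrix X X ℝ}
    (hM : ∀ i j, 0 ≤ M i j) {u w : X → ℝ} (h : u ≤ w) : M *ᵥ u ≤ M *ᵥ w := fun i =>
  sum_le_sum fun j _ => mul_le_mul_of_nonneg_left (h j) (hM i j)

lemma Matrix.inv_one_sub_smul_eq {X R : Type*} [Fintype X] [DecidableEq X] [CommRing R]
    {P : Matrix X X R} {γ : R} (h : IsUnit (1 - γ • P).det) :
    (1 - γ • P)⁻¹ = 1 + γ • (P * (1 - γ • P)⁻¹) := by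
  have hinv := mul_nonsing_inv (1 - γ • P) h
  rw [Matrix.sub_mul, Matrix.one_mul, Matrix.smul_mul] at hinv
  exact sub_eq_iff_eq_add.mp hinv

namespace IsStochastic

variable {X : Type*} [Fintype X] {P : Matrix X X ℝ} {γ : ℝ}

lemma le_mulVec_of_isMin (hP : IsStochastic P) {x : X → ℝ} {i : X} (hi : ∀ j, x i ≤ x j) :
    x i ≤ (P *ᵥ x) i :=
  calc x i = ∑ j, P i j * x i := by rw [← sum_mul, hP.2 i, one_mul]
    _ ≤ ∑ j, P i j * x j := sum_le_sum fun j _ => mul_le_mul_of_nonneg_left (hi j) (hP.1 i j)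

variable [DecidableEq X]

/-- Minimum principle: at a minimum of `x`, `x i ≥ γ (P x) i ≥ γ x i` forces `x i ≥ 0`. -/
lemma nonneg_of_one_sub_smul_mulVec_nonneg (hP : IsStochastic P) (hγ0 : 0 ≤ γ) (hγ1 : γ < 1)
    {x : X → ℝ} (hx : 0 ≤ (1 - γ • P) *ᵥ x) : 0 ≤ x := by
  intro j
  obtain ⟨i, -, hi⟩ := exists_min_image univ x ⟨j, mem_univ j⟩
  have hPx : γ * x i ≤ γ * (P *ᵥ x) i :=
    mul_le_mul_of_nonneg_left (hP.le_mulVec_of_isMin fun k => hi k (mem_univ k)) hγ0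
  have hxi : 0 ≤ x i - γ * (P *ᵥ x) i := by
    simpa only [sub_mulVec, one_mulVec, smul_mulVec, Pi.sub_apply, Pi.smul_apply, smul_eq_mul,
      Pi.zero_apply] using hx i
  have : 0 ≤ x i := by nlinarith
  exact this.trans (hi j (mem_univ j))

lemma isUnit_det_one_sub_smul (hP : IsStochastic P) (hγ0 : 0 ≤ γ) (hγ1 : γ < 1) :
    IsUnit (1 - γ • P).det := by
  rw [isUnit_iff_ne_zero]
  intro hdet
  obtain ⟨x, hx, hx0⟩ := exists_mulVec_eq_zero_iff.mpr hdet
  have hnonneg := hP.nonneg_of_one_sub_smul_mulVec_nonneg hγ0 hγ1 hx0.ge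
  have hnonpos := hP.nonneg_of_one_sub_smul_mulVec_nonneg hγ0 hγ1 (x := -x)
    (by rw [mulVec_neg, hx0, neg_zero])
  exact hx (le_antisymm (neg_nonneg.mp hnonpos) hnonneg)

lemma inv_one_sub_smul_mulVec_mono (hP : IsStochastic P) (hγ0 : 0 ≤ γ) (hγ1 : γ < 1)
    {u w : X → ℝ} (h : u ≤ w) : (1 - γ • P)⁻¹ *ᵥ u ≤ (1 - γ • P)⁻¹ *ᵥ w := by
  rw [← sub_nonneg, ← mulVec_sub]
  apply hP.nonneg_of_one_sub_smul_mulVec_nonneg hγ0 hγ1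
  rw [mulVec_mulVec, mul_nonsing_inv _ (hP.isUnit_det_one_sub_smul hγ0 hγ1), one_mulVec]
  exact sub_nonneg.mpr h

end IsStochastic

section Policies

variable {X : Type*} {A : Type*} [Fintype X] (p : X → A → X → ℝ) (r : X → A → X → ℝ) (γ : ℝ)

lemma isStochastic_Pmat (hp0 : ∀ i a j, 0 ≤ p i a j) (hp1 : ∀ i a, ∑ j, p i a j = 1)
    (π : X → A) : IsStochastic (Pmat p π) :=
  ⟨fun i j => hp0 i (π i) j, fun i => hp1 i (π i)⟩

lemma Tpol_sub_Tpol (π : X → A) (u w : X → ℝ) :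
    Tpol p r γ π u - Tpol p r γ π w = γ • Pmat p π *ᵥ (u - w) := by
  simp only [Tpol, mulVec_sub, smul_sub]
  abel

lemma Tpol_le_Topt [Fintype A] [Nonempty A] (π : X → A) (v : X → ℝ) :
    Tpol p r γ π v ≤ Topt p r γ v := fun i => by
  have hTpol : Tpol p r γ π v i = ∑ j, p i (π i) j * (r i (π i) j + γ * v j) := by
    simp only [Tpol, rvec, Pmat, Pi.add_apply, Pi.smul_apply, smul_eq_mul, mulVec, dotProduct,
      of_apply, mul_add, sum_add_distrib, mul_sum]
    congr 1
    exact sum_congr rfl fun j _ => by ring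
  rw [hTpol]
  exact le_sup' (fun a => ∑ j, p i a j * (r i a j + γ * v j)) (mem_univ (π i))

lemma vpi_eq_add_inv_mulVec_residual [DecidableEq X] (π : X → A) (v : X → ℝ)
    (h : IsUnit (1 - γ • Pmat p π).det) :
    vpi p r γ π = v + (1 - γ • Pmat p π)⁻¹ *ᵥ (Tpol p r γ π v - v) := by
  have hres : Tpol p r γ π v - v = rvec p r π - (1 - γ • Pmat p π) *ᵥ v := by
    simp only [Tpol, sub_mulVec, one_mulVec, smul_mulVec]
    abel
  rw [hres, mulVec_sub, mulVec_mulVec, nonsing_inv_mul _ h, one_mulVec, vpi]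
  abel

lemma sub_le_smul_mulVec_add_Topt_sub [Fintype A] [Nonempty A] {vstar : X → ℝ}
    (hfix : Topt p r γ vstar = vstar) {πs : X → A} (hπs : Greedy p r γ πs vstar) (v : X → ℝ) :
    vstar - v ≤ γ • Pmat p πs *ᵥ (vstar - v) + (Topt p r γ v - v) := by
  have hvstar : vstar = Tpol p r γ πs vstar := (hπs.trans hfix).symm
  calc vstar - v = (Tpol p r γ πs vstar - Tpol p r γ πs v) + (Tpol p r γ πs v - v) := by
        rw [← hvstar]; abel
    _ ≤ γ • Pmat p πs *ᵥ (vstar - v) + (Topt p r γ v - v) := by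
        rw [Tpol_sub_Tpol]
        exact add_le_add_right (sub_le_sub_right (Tpol_le_Topt p r γ πs v) v) _

end Policies

theorem one_step_improvement_policy_bellman_residual_general
    {X A : Type*} [Fintype X] [DecidableEq X] [Fintype A] [Nonempty A]
    (p : X → A → X → ℝ) (r : X → A → X → ℝ) (γ : ℝ)
    (hp0 : ∀ i a j, 0 ≤ p i a j) (hp1 : ∀ i a, ∑ j, p i a j = 1)
    (hγ0 : 0 < γ) (hγ1 : γ < 1)
    (vstar : X → ℝ) (hfix : Topt p r γ vstar = vstar)
    (πs : X → A) (hπs : Greedy p r γ πs vstar)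
    -- a policy π, an approximation v of its value, and π' greedy with respect to v
    (π π' : X → A) (v : X → ℝ) (hgreedy : Greedy p r γ π' v) :
    vstar - vpi p r γ π' ≤
      γ • (Pmat p πs).mulVec (vstar - vpi p r γ π) +
        ((γ • (Pmat p πs * ((1 : Matrix X X ℝ) - γ • Pmat p π)⁻¹) -
            γ • (Pmat p π' * ((1 : Matrix X X ℝ) - γ • Pmat p π')⁻¹)).mulVec
          (Tpol p r γ π v - v)) := by
  have hP := isStochastic_Pmat p hp0 hp1
  have hdet (σ : X → A) := (hP σ).isUnit_det_one_sub_smul hγ0.le hγ1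
  set Q := (1 - γ • Pmat p π)⁻¹
  set Q' := (1 - γ • Pmat p π')⁻¹
  set b := Tpol p r γ π v - v
  set b' := Topt p r γ v - v
  have hvpi : vpi p r γ π = v + Q *ᵥ b := vpi_eq_add_inv_mulVec_residual p r γ π v (hdet π)
  have hvpi' : vpi p r γ π' = v + b' + γ • ((Pmat p π' * Q') *ᵥ b') := by
    rw [vpi_eq_add_inv_mulVec_residual p r γ π' v (hdet π'),
      show Tpol p r γ π' v = _ from hgreedy, inv_one_sub_smul_eq (hdet π'), add_mulVec,
      one_mulVec, smul_mulVec, add_assoc]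
  have hb : b ≤ b' := sub_le_sub_right (Tpol_le_Topt p r γ π v) v
  have hmono : γ • ((Pmat p π' * Q') *ᵥ b) ≤ γ • ((Pmat p π' * Q') *ᵥ b') := by
    rw [← mulVec_mulVec, ← mulVec_mulVec]
    exact smul_le_smul_of_nonneg_left (mulVec_mono_of_nonneg (hP π').1
      ((hP π').inv_one_sub_smul_mulVec_mono hγ0.le hγ1 hb)) hγ0.le
  have hstar : vstar - v ≤ γ • Pmat p πs *ᵥ (vstar - v) + b' :=
    sub_le_smul_mulVec_add_Topt_sub p r γ hfix hπs v
  calc vstar - vpi p r γ π' = vstar - v - b' - γ • ((Pmat p π' * Q') *ᵥ b') := by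
        rw [hvpi']; abel
    _ ≤ γ • Pmat p πs *ᵥ (vstar - v) - γ • ((Pmat p π' * Q') *ᵥ b) :=
        sub_le_sub (sub_le_iff_le_add.mpr hstar) hmono
    _ = _ := by
        rw [hvpi]
        simp only [mulVec_sub, sub_mulVec, smul_mulVec, mulVec_mulVec, mulVec_add, smul_sub,
          smul_add]
        abel

/-- One-step policy improvement bound with respect to the Policy Bellman residual. -/
theorem one_step_improvement_policy_bellman_residual
    {X A : Type*} [Fintype X] [Nonempty X] [DecidableEq X] [Fintype A] [Nonempty A]
    (p : X → A → X → ℝ) (r : X → A → X → ℝ) (γ : ℝ)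
    (hp0 : ∀ i a j, 0 ≤ p i a j) (hp1 : ∀ i a, ∑ j, p i a j = 1)
    (hγ0 : 0 < γ) (hγ1 : γ < 1)
    (vstar : X → ℝ) (hfix : Topt p r γ vstar = vstar)
    (πs : X → A) (hπs : Greedy p r γ πs vstar)
    -- a policy π, an approximation v of its value, and π' greedy with respect to v
    (π π' : X → A) (v : X → ℝ) (hgreedy : Greedy p r γ π' v) :
    vstar - vpi p r γ π' ≤
      γ • (Pmat p πs).mulVec (vstar - vpi p r γ π) +
        ((γ • (Pmat p πs * ((1 : Matrix X X ℝ) - γ • Pmat p π)⁻¹) -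
            γ • (Pmat p π' * ((1 : Matrix X X ℝ) - γ • Pmat p π')⁻¹)).mulVec
          (Tpol p r γ π v - v)) :=
  one_step_improvement_policy_bellman_residual_general p r γ hp0 hp1 hγ0 hγ1 vstar hfix πs hπs π π'
    v hgreedy
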